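/- arXiv:1701.07805 — 3 statements merged into one kernel-verified Lean document; each statement's English description precedes it below -/
import Mathlib

section
/- (Lemma 2b) Under the hypotheses of the nonnegative bivariate decomposition, define C̄I*(S;X₁,X₂) := I(S;X₁X₂) − SĪ(S;X₁,X₂) − ŪI*(S;X₁\X₂) − ŪI*(S;X₂\X₁), where SĪ(S;X₁,X₂) := max_f SI(f(S);X₁,X₂) and ŪI*(S;Xᵢ\Xⱼ) := I(S;Xᵢ) − SĪ(S;X₁,X₂). Then C̄I*(S;X₁,X₂) = SĪ(S;X₁,X₂) − CoI(S;X₁,X₂) ≥ CI(S;X₁,X₂) ≥ 0. -/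
/- Common definitions: finite joint distributions, mutual information (in nats),
   conditional mutual information, pushforwards, information decompositions. -/

open Finset
open scoped Classical

namespace Paper

noncomputable section

variable {S T T' X X₁ X₂ Z A B : Type*}

/-- Marginal of the first variable of a joint distribution. -/
def m1 [Fintype X] (p : S → X → ℝ) (s : S) : ℝ := ∑ x, p s x

/-- Marginal of the second variable of a joint distribution. -/
def m2 [Fintype S] (p : S → X → ℝ) (x : X) : ℝ := ∑ s, p s x

/-- Mutual information I(S;X) (in nats) of a finite joint distribution. -/
def MI [Fintype S] [Fintype X] (p : S → X → ℝ) : ℝ :=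
  ∑ s, ∑ x, p s x * Real.log (p s x / (m1 p s * m2 p x))

/-- `p` is a probability mass function on the product of two finite alphabets. -/
def IsPMF [Fintype S] [Fintype X] (p : S → X → ℝ) : Prop :=
  (∀ s x, 0 ≤ p s x) ∧ ∑ s, ∑ x, p s x = 1

/-- `p` is a probability mass function on the product of three finite alphabets. -/
def IsPMF3 [Fintype S] [Fintype X₁] [Fintype X₂] (p : S → X₁ → X₂ → ℝ) : Prop :=
  (∀ s x₁ x₂, 0 ≤ p s x₁ x₂) ∧ ∑ s, ∑ x₁, ∑ x₂, p s x₁ x₂ = 1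

/-- Marginal joint distribution of (S,X₁). -/
def m12 [Fintype X₂] (p : S → X₁ → X₂ → ℝ) : S → X₁ → ℝ := fun s x₁ => ∑ x₂, p s x₁ x₂

/-- Marginal joint distribution of (S,X₂). -/
def m13 [Fintype X₁] (p : S → X₁ → X₂ → ℝ) : S → X₂ → ℝ := fun s x₂ => ∑ x₁, p s x₁ x₂

/-- Joint distribution of (S,(X₁,X₂)). -/
def joint (p : S → X₁ → X₂ → ℝ) : S → X₁ × X₂ → ℝ := fun s x => p s x.1 x.2

/-- I(S;X₁). -/
def MI1 [Fintype S] [Fintype X₁] [Fintype X₂] (p : S → X₁ → X₂ → ℝ) : ℝ := MI (m12 p)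

/-- I(S;X₂). -/
def MI2 [Fintype S] [Fintype X₁] [Fintype X₂] (p : S → X₁ → X₂ → ℝ) : ℝ := MI (m13 p)

/-- I(S;X₁X₂). -/
def MI12 [Fintype S] [Fintype X₁] [Fintype X₂] (p : S → X₁ → X₂ → ℝ) : ℝ := MI (joint p)

/-- Conditional mutual information I(S;X₁ ∣ X₂) (in nats). -/
def CMI [Fintype S] [Fintype X₁] [Fintype X₂] (p : S → X₁ → X₂ → ℝ) : ℝ :=
  ∑ s, ∑ x₁, ∑ x₂, p s x₁ x₂ *
    Real.log ((p s x₁ x₂ * (∑ s', ∑ x₁', p s' x₁' x₂)) /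
      ((∑ x₁', p s x₁' x₂) * (∑ s', p s' x₁ x₂)))

/-- Co-information CoI(S;X₁,X₂) = I(S;X₁) − I(S;X₁|X₂). -/
def CoI [Fintype S] [Fintype X₁] [Fintype X₂] (p : S → X₁ → X₂ → ℝ) : ℝ :=
  MI1 p - CMI p

/-- Swap the two predictor arguments. -/
def swap23 (p : S → X₁ → X₂ → ℝ) : S → X₂ → X₁ → ℝ := fun s x₂ x₁ => p s x₁ x₂

/-- Pushforward of the target variable S by a function f (joint of (f(S),X)). -/
def pushS [Fintype S] (f : S → T) (p : S → X → ℝ) : T → X → ℝ :=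
  fun t x => ∑ s, if f s = t then p s x else 0

/-- Pushforward of the target variable S by f, for triples (joint of (f(S),X₁,X₂)). -/
def pushS3 [Fintype S] (f : S → T) (p : S → X₁ → X₂ → ℝ) : T → X₁ → X₂ → ℝ :=
  fun t x₁ x₂ => ∑ s, if f s = t then p s x₁ x₂ else 0

/-- Joint distribution of the triple (f(S), S, X), from the joint of (S,X). -/
def tripleOf (f : S → T) (p : S → X → ℝ) : T → S → X → ℝ :=
  fun t s x => if f s = t then p s x else 0

/-- A and B are conditionally independent given Z (r is the joint of (Z,A,B));
    equivalently A — Z — B is a Markov chain. -/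
def CondIndep [Fintype A] [Fintype B] (r : Z → A → B → ℝ) : Prop :=
  ∀ z a b, r z a b * (∑ a', ∑ b', r z a' b') = (∑ b', r z a b') * (∑ a', r z a' b)

/-- The channel T → X₁ (given by the joint q1) is a garbling/degradation of the
    channel T → X₂ (given by the joint q2): q1 = λ ∘ q2 for a stochastic matrix λ. -/
def Garbling [Fintype X₁] [Fintype X₂] (q1 : T → X₁ → ℝ) (q2 : T → X₂ → ℝ) : Prop :=
  ∃ lam : X₂ → X₁ → ℝ, (∀ x₂ x₁, 0 ≤ lam x₂ x₁) ∧ (∀ x₂, ∑ x₁, lam x₂ x₁ = 1) ∧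
    ∀ t x₁, q1 t x₁ = ∑ x₂, lam x₂ x₁ * q2 t x₂

/-- Joint distribution of (COPY(X₁,X₂), X₁, X₂) built from the joint of (X₁,X₂). -/
def copyTriple (q : X₁ → X₂ → ℝ) : X₁ × X₂ → X₁ → X₂ → ℝ :=
  fun t x₁ x₂ => if t = (x₁, x₂) then q x₁ x₂ else 0

/-- The extractable information measure IM̄(S;X) := max over functions f on the
    range of S of IM(f(S);X).  (Only the partition of S induced by f matters,
    so functions with codomain S suffice and the supremum is attained.) -/
def extIM [Fintype S] [Fintype X] (IM : (S → X → ℝ) → ℝ) (p : S → X → ℝ) : ℝ :=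
  ⨆ f : S → S, IM (pushS f p)

/-- A nonnegative bivariate information decomposition (for fixed predictor
    alphabets X₁, X₂ and varying target alphabet T): shared, unique and
    complementary information, nonnegative and satisfying the Williams–Beer
    bivariate decomposition equations. -/
structure BID (X₁ X₂ : Type) [Fintype X₁] [Fintype X₂] where
  SI : ∀ (T : Type) [Fintype T], (T → X₁ → X₂ → ℝ) → ℝ
  UI1 : ∀ (T : Type) [Fintype T], (T → X₁ → X₂ → ℝ) → ℝ
  UI2 : ∀ (T : Type) [Fintype T], (T → X₁ → X₂ → ℝ) → ℝ
  CI : ∀ (T : Type) [Fintype T], (T → X₁ → X₂ → ℝ) → ℝ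
  SI_nonneg : ∀ (T : Type) [Fintype T] (p : T → X₁ → X₂ → ℝ), IsPMF3 p → 0 ≤ SI T p
  UI1_nonneg : ∀ (T : Type) [Fintype T] (p : T → X₁ → X₂ → ℝ), IsPMF3 p → 0 ≤ UI1 T p
  UI2_nonneg : ∀ (T : Type) [Fintype T] (p : T → X₁ → X₂ → ℝ), IsPMF3 p → 0 ≤ UI2 T p
  CI_nonneg : ∀ (T : Type) [Fintype T] (p : T → X₁ → X₂ → ℝ), IsPMF3 p → 0 ≤ CI T p
  eq_total : ∀ (T : Type) [Fintype T] (p : T → X₁ → X₂ → ℝ), IsPMF3 p →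
    MI12 p = SI T p + CI T p + UI1 T p + UI2 T p
  eq_one : ∀ (T : Type) [Fintype T] (p : T → X₁ → X₂ → ℝ), IsPMF3 p →
    MI1 p = SI T p + UI1 T p
  eq_two : ∀ (T : Type) [Fintype T] (p : T → X₁ → X₂ → ℝ), IsPMF3 p →
    MI2 p = SI T p + UI2 T p

/-- Extractable shared information SĪ(S;X₁,X₂) := max_f SI(f(S);X₁,X₂). -/
def SIbar {X₁ X₂ : Type} [Fintype X₁] [Fintype X₂] (D : BID X₁ X₂)
    {T : Type} [Fintype T] (p : T → X₁ → X₂ → ℝ) : ℝ :=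
  ⨆ f : T → T, D.SI T (pushS3 f p)

/-- Pushforward of the predictors (X₁,...,X_k) ↦ (f₁(X₁),...,f_k(X_k)). -/
def pushPred {ι : Type*} [Fintype ι] [DecidableEq ι] {X : ι → Type*} [∀ i, Fintype (X i)]
    [Fintype S] (f : ∀ i, X i → X i) (p : S → (∀ i, X i) → ℝ) : S → (∀ i, X i) → ℝ :=
  fun s y => ∑ x, if (fun i => f i (x i)) = y then p s x else 0

/-- Marginal joint distribution of (S, X_i) for a family of predictors. -/
def margFam {ι : Type*} [Fintype ι] [DecidableEq ι] (X : ι → Type*) [∀ i, Fintype (X i)]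
    [Fintype S] (p : S → (∀ i, X i) → ℝ) (i : ι) (s : S) (y : X i) : ℝ :=
  ∑ x : ∀ j, X j, if x i = y then p s x else 0

/-- Specific information of s provided by X_i:
    ∑_{x_i} P(x_i|s) log (P(s|x_i)/P(s)). -/
def specInfo {ι : Type*} [Fintype ι] [DecidableEq ι] (X : ι → Type*) [∀ i, Fintype (X i)]
    [Fintype S] (p : S → (∀ i, X i) → ℝ) (i : ι) (s : S) : ℝ :=
  ∑ y : X i, (margFam X p i s y / m1 p s) *
    Real.log ((margFam X p i s y / (∑ s', margFam X p i s' y)) / m1 p s)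

/-- Williams and Beer's measure I_min(S;X₁,...,X_k). -/
def Imin {ι : Type*} [Fintype ι] [DecidableEq ι] [Nonempty ι] (X : ι → Type*)
    [∀ i, Fintype (X i)] [Fintype S] (p : S → (∀ i, X i) → ℝ) : ℝ :=
  ∑ s, m1 p s * ⨅ i, specInfo X p i s

/-- The counterexample distribution on {0,1,2} × {0,1} × {0,1}:
    P(0,0,0)=1/4, P(1,0,1)=1/4, P(0,1,0)=1/8, P(1,1,0)=1/8, P(2,1,1)=1/4. -/
def cex : Fin 3 → Bool → Bool → ℝ := fun s x₁ x₂ =>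
  if s = 0 ∧ x₁ = false ∧ x₂ = false then 1/4
  else if s = 1 ∧ x₁ = false ∧ x₂ = true then 1/4
  else if s = 0 ∧ x₁ = true ∧ x₂ = false then 1/8
  else if s = 1 ∧ x₁ = true ∧ x₂ = false then 1/8
  else if s = 2 ∧ x₁ = true ∧ x₂ = true then 1/4
  else 0

/-- The function f with f(0)=f(1)=0, f(2)=2 on Fin 3 (the partition {0,1},{2}). -/
def fstar : Fin 3 → Fin 3 := fun s => if s = 2 then 2 else 0


/-! The chain rule `I(S;X₁|X₂) = I(S;X₁X₂) − I(S;X₂)` turns the co-information into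
`I(S;X₁) + I(S;X₂) − I(S;X₁X₂)`, and the three decomposition equations then give
`CI = SI − CoI`. Since `f = id` is admissible in `SĪ`, `SI ≤ SĪ`, whence `CI ≤ SĪ − CoI`. -/

lemma single_le_sum_sum {α β : Type*} [Fintype α] [Fintype β] {f : α → β → ℝ}
    (hf : ∀ a b, 0 ≤ f a b) (a : α) (b : β) : f a b ≤ ∑ a', ∑ b', f a' b' :=
  (single_le_sum (fun b' _ => hf a b') (mem_univ b)).trans
    (single_le_sum (fun a' _ => sum_nonneg fun b' _ => hf a' b') (mem_univ a))

lemma log_mul_div_mul_eq_sub {a b c d e : ℝ} (ha : 0 < a) (hb : 0 < b) (hc : 0 < c)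
    (hd : 0 < d) (he : 0 < e) :
    Real.log (a * b / (c * d)) = Real.log (a / (e * d)) - Real.log (c / (e * b)) := by
  rw [← Real.log_div (by positivity) (by positivity)]
  congr 1
  field_simp

lemma MI12_eq_sum [Fintype S] [Fintype X₁] [Fintype X₂] (p : S → X₁ → X₂ → ℝ) :
    MI12 p = ∑ s, ∑ x₁, ∑ x₂, p s x₁ x₂ *
      Real.log (p s x₁ x₂ / ((∑ x₁', ∑ x₂', p s x₁' x₂') * ∑ s', p s' x₁ x₂)) := by
  simp only [MI12, MI, joint, m1, m2, Fintype.sum_prod_type]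

lemma MI2_eq_sum [Fintype S] [Fintype X₁] [Fintype X₂] (p : S → X₁ → X₂ → ℝ) :
    MI2 p = ∑ s, ∑ x₁, ∑ x₂, p s x₁ x₂ *
      Real.log ((∑ x₁', p s x₁' x₂) /
        ((∑ x₁', ∑ x₂', p s x₁' x₂') * ∑ s', ∑ x₁', p s' x₁' x₂)) := by
  have hm1 : ∀ s, m1 (m13 p) s = ∑ x₁, ∑ x₂, p s x₁ x₂ := fun s => sum_comm
  simp only [MI2, MI, hm1, m13, m2]
  refine sum_congr rfl fun s _ => ?_
  conv_rhs => rw [sum_comm]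
  exact sum_congr rfl fun x₂ _ => by rw [sum_mul]

/-- Holds summand by summand: every marginal occurring in a summand dominates `p s x₁ x₂`,
so it is positive wherever the summand is nonzero. -/
theorem CMI_eq_MI12_sub_MI2 [Fintype S] [Fintype X₁] [Fintype X₂] {p : S → X₁ → X₂ → ℝ}
    (hp : ∀ s x₁ x₂, 0 ≤ p s x₁ x₂) : CMI p = MI12 p - MI2 p := by
  rw [MI12_eq_sum, MI2_eq_sum, CMI]
  simp only [← sum_sub_distrib, ← mul_sub]
  refine sum_congr rfl fun s _ => sum_congr rfl fun x₁ _ => sum_congr rfl fun x₂ _ => ?_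
  rcases (hp s x₁ x₂).eq_or_lt with hzero | hpos
  · simp [← hzero]
  · congr 1
    exact log_mul_div_mul_eq_sub hpos
      (hpos.trans_le (single_le_sum_sum (fun s' x₁' => hp s' x₁' x₂) s x₁))
      (hpos.trans_le (single_le_sum (fun x₁' _ => hp s x₁' x₂) (mem_univ x₁)))
      (hpos.trans_le (single_le_sum (fun s' _ => hp s' x₁ x₂) (mem_univ s)))
      (hpos.trans_le (single_le_sum_sum (hp s) x₁ x₂))

theorem CoI_eq_MI1_add_MI2_sub_MI12 [Fintype S] [Fintype X₁] [Fintype X₂]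
    {p : S → X₁ → X₂ → ℝ} (hp : ∀ s x₁ x₂, 0 ≤ p s x₁ x₂) :
    CoI p = MI1 p + MI2 p - MI12 p := by
  rw [CoI, CMI_eq_MI12_sub_MI2 hp]
  ring

@[simp]
lemma pushS3_id [Fintype S] (p : S → X₁ → X₂ → ℝ) : pushS3 id p = p := by
  funext s x₁ x₂
  simp [pushS3]

lemma BID.SI_le_SIbar {X₁ X₂ : Type} [Fintype X₁] [Fintype X₂] (D : BID X₁ X₂)
    {T : Type} [Fintype T] (p : T → X₁ → X₂ → ℝ) : D.SI T p ≤ SIbar D p :=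
  le_ciSup_of_le (Finite.bddAbove_range _) id (by rw [pushS3_id])

lemma BID.CI_eq_SI_sub_CoI {X₁ X₂ : Type} [Fintype X₁] [Fintype X₂] (D : BID X₁ X₂)
    {T : Type} [Fintype T] {p : T → X₁ → X₂ → ℝ} (hp : IsPMF3 p) :
    D.CI T p = D.SI T p - CoI p := by
  have htotal := D.eq_total T p hp
  have hone := D.eq_one T p hp
  have htwo := D.eq_two T p hp
  rw [CoI_eq_MI1_add_MI2_sub_MI12 hp.1]
  linarith

/-- Lemma 2b: C̄I*(S;X₁,X₂) = SĪ(S;X₁,X₂) − CoI(S;X₁,X₂) ≥ CI(S;X₁,X₂) ≥ 0. -/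
theorem CIbar_star {X₁ X₂ : Type} [Fintype X₁] [Fintype X₂]
    (D : BID X₁ X₂) {T : Type} [Fintype T]
    (p : T → X₁ → X₂ → ℝ) (hp : IsPMF3 p) :
    MI12 p - SIbar D p - (MI1 p - SIbar D p) - (MI2 p - SIbar D p)
      = SIbar D p - CoI p
    ∧ D.CI T p ≤ SIbar D p - CoI p
    ∧ 0 ≤ D.CI T p := by
  have hCoI := CoI_eq_MI1_add_MI2_sub_MI12 hp.1
  have hCI := D.CI_eq_SI_sub_CoI hp
  have hSI := D.SI_le_SIbar p
  exact ⟨by rw [hCoI]; ring, by linarith, D.CI_nonneg T p hp⟩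

end
end Paper
end

section
/- (Corollary) There is no nonnegative bivariate information decomposition (SI, UI, CI) in which UI satisfies the Blackwell property and SI satisfies left monotonicity. -/
/- Common definitions: finite joint distributions, mutual information (in nats),
   conditional mutual information, pushforwards, information decompositions. -/

open Finset
open scoped Classical

namespace Paper

noncomputable section

variable {S T T' X X₁ X₂ Z A B : Type*}

/-! Let `p = cex` and let `q` be the law of `(f(S), X₁, X₂)`. Under `q` the channels from
`f(S)` to `X₁` and to `X₂` coincide, so by the Blackwell property `UI(q) = 0` and
`SI(q) = I(f(S);X₁)`. Under `p` the channel `S → X₁` is not a garbling of `S → X₂`, so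
`UI(p) > 0` and `SI(p) < I(S;X₁)`. As `X₁` depends on `S` only through `f(S)`, the two
mutual informations agree, hence `SI(q) > SI(p)`, contradicting left monotonicity. -/

theorem sum_pushS_mul [Fintype S] [Fintype T] (f : S → T) (p : S → X → ℝ) (x : X)
    (h : T → ℝ) : ∑ t, pushS f p t x * h t = ∑ s, p s x * h (f s) := by
  simp only [pushS, Finset.sum_mul, ite_mul, zero_mul]
  rw [Finset.sum_comm]
  simp

theorem m2_pushS [Fintype S] [Fintype T] (f : S → T) (p : S → X → ℝ) :
    m2 (pushS f p) = m2 p := by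
  funext x
  simpa [m2] using sum_pushS_mul f p x (fun _ => 1)

theorem m1_le_m1_pushS [Fintype S] [Fintype X] (f : S → T) {p : S → X → ℝ}
    (hp : ∀ s x, 0 ≤ p s x) (s : S) : m1 p s ≤ m1 (pushS f p) (f s) := by
  have hfib : ∀ s', 0 ≤ ∑ x, if f s' = f s then p s' x else 0 := fun s' =>
    Finset.sum_nonneg fun x _ => by split_ifs <;> simp [hp]
  simp only [m1, pushS]
  rw [Finset.sum_comm]
  refine le_of_eq_of_le ?_ (Finset.single_le_sum (fun s' _ => hfib s') (mem_univ s))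
  simp

theorem MI_pushS_of_condIndep [Fintype S] [Fintype T] [Fintype X] {f : S → T}
    {p : S → X → ℝ} (hp : ∀ s x, 0 ≤ p s x) (hci : CondIndep (tripleOf f p)) :
    MI (pushS f p) = MI p := by
  -- `P(x | s) = P(x | f s)`, with the denominators cleared
  have hcond : ∀ s x, p s x * m1 (pushS f p) (f s) = m1 p s * pushS f p (f s) x := by
    intro s x
    simpa [tripleOf, m1, pushS, Finset.sum_comm (γ := X)] using hci (f s) s x
  unfold MI
  rw [m2_pushS, Finset.sum_comm, Finset.sum_comm (γ := S)]
  refine Finset.sum_congr rfl fun x _ => ?_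
  rw [sum_pushS_mul f p x]
  refine Finset.sum_congr rfl fun s _ => ?_
  rcases (hp s x).eq_or_lt with h0 | hpos
  · simp [← h0]
  have hm1 : 0 < m1 p s := hpos.trans_le (Finset.single_le_sum (fun x _ => hp s x) (mem_univ x))
  have hm1' : 0 < m1 (pushS f p) (f s) := hm1.trans_le (m1_le_m1_pushS f hp s)
  have hm2 : 0 < m2 p x := hpos.trans_le (Finset.single_le_sum (fun s _ => hp s x) (mem_univ s))
  congr 2
  rw [div_eq_div_iff (by positivity) (by positivity)]
  linear_combination -(m2 p x) * hcond s x

theorem m12_pushS3 [Fintype S] [Fintype X₂] (f : S → T) (p : S → X₁ → X₂ → ℝ) :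
    m12 (pushS3 f p) = pushS f (m12 p) := by
  funext t x₁
  simp only [m12, pushS3, pushS]
  rw [Finset.sum_comm]
  refine Finset.sum_congr rfl fun s _ => ?_
  split_ifs <;> simp

theorem IsPMF3.pushS3 [Fintype S] [Fintype T] [Fintype X₁] [Fintype X₂]
    {p : S → X₁ → X₂ → ℝ} (hp : IsPMF3 p) (f : S → T) : IsPMF3 (pushS3 f p) := by
  refine ⟨fun t x₁ x₂ => Finset.sum_nonneg fun s _ => ?_, ?_⟩
  · split_ifs
    exacts [hp.1 s x₁ x₂, le_rfl]
  · calc ∑ t, ∑ x₁, ∑ x₂, Paper.pushS3 f p t x₁ x₂ = ∑ x₁, ∑ t, pushS f (m12 p) t x₁ * 1 := by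
          rw [Finset.sum_comm, ← m12_pushS3]
          simp [m12]
      _ = ∑ x₁, ∑ s, m12 p s x₁ * 1 := by simp_rw [sum_pushS_mul]
      _ = 1 := by simpa [m12, Finset.sum_comm (γ := X₁)] using hp.2

theorem MI1_pushS3_of_condIndep [Fintype S] [Fintype T] [Fintype X₁] [Fintype X₂]
    {f : S → T} {p : S → X₁ → X₂ → ℝ} (hp : IsPMF3 p) (hci : CondIndep (tripleOf f (m12 p))) :
    MI1 (pushS3 f p) = MI1 p := by
  rw [MI1, MI1, m12_pushS3]
  exact MI_pushS_of_condIndep (fun s x₁ => Finset.sum_nonneg fun x₂ _ => hp.1 s x₁ x₂) hci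

theorem Garbling.refl [Fintype X] (q : T → X → ℝ) : Garbling q q :=
  ⟨fun x x' => if x' = x then 1 else 0, fun _ _ => by dsimp only; split_ifs <;> norm_num,
    fun _ => by simp, fun _ _ => by simp⟩

namespace BID

variable {X₁ X₂ : Type} [Fintype X₁] [Fintype X₂]

def IsBlackwell (D : BID X₁ X₂) : Prop :=
  ∀ (T : Type) [Fintype T] (p : T → X₁ → X₂ → ℝ), IsPMF3 p →
    (D.UI1 T p = 0 ↔ Garbling (m12 p) (m13 p))

variable {D : BID X₁ X₂} {T : Type} [Fintype T] {p : T → X₁ → X₂ → ℝ}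

theorem IsBlackwell.SI_eq_MI1 (hD : D.IsBlackwell) (hp : IsPMF3 p)
    (hg : Garbling (m12 p) (m13 p)) : D.SI T p = MI1 p := by
  rw [D.eq_one T p hp, (hD T p hp).mpr hg, add_zero]

theorem IsBlackwell.SI_lt_MI1 (hD : D.IsBlackwell) (hp : IsPMF3 p)
    (hg : ¬ Garbling (m12 p) (m13 p)) : D.SI T p < MI1 p := by
  have hUI : 0 < D.UI1 T p := (D.UI1_nonneg T p hp).lt_of_ne' (mt (hD T p hp).mp hg)
  linarith [D.eq_one T p hp]

end BID

theorem isPMF3_cex : IsPMF3 cex := by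
  refine ⟨fun s x₁ x₂ => ?_, ?_⟩
  · simp only [cex]
    split_ifs <;> norm_num
  · simp only [cex, Fin.sum_univ_three, Fintype.sum_bool]
    norm_num [Fin.ext_iff]

theorem m12_cex (s : Fin 3) (x₁ : Bool) : m12 cex s x₁ =
    if s = 2 then (if x₁ then 1/4 else 0) else (if x₁ then 1/8 else 1/4) := by
  fin_cases s <;> cases x₁ <;> norm_num [m12, cex, Fintype.sum_bool, Fin.ext_iff]

theorem m13_cex (s : Fin 3) (x₂ : Bool) : m13 cex s x₂ =
    if s = 0 then (if x₂ then 0 else 3/8) else if s = 1 then (if x₂ then 1/4 else 1/8)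
      else (if x₂ then 1/4 else 0) := by
  fin_cases s <;> cases x₂ <;> norm_num [m13, cex, Fintype.sum_bool, Fin.ext_iff]

theorem m12_pushS3_fstar_cex : m12 (pushS3 fstar cex) = m13 (pushS3 fstar cex) := by
  funext t x
  simp only [m12, m13, pushS3, Fin.sum_univ_three, Fintype.sum_bool, fstar, cex]
  fin_cases t <;> cases x <;> norm_num [Fin.ext_iff]

theorem condIndep_tripleOf_fstar_cex : CondIndep (tripleOf fstar (m12 cex)) := by
  intro t s x
  simp only [tripleOf, Fin.sum_univ_three, Fintype.sum_bool, m12_cex, fstar]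
  fin_cases t <;> fin_cases s <;> cases x <;> norm_num [Fin.ext_iff]

/-- Given `S = 2`, `X₂ = 1` forces `X₁ = 1`, so a garbling `λ` must send `1` to `1`;
then the rows `S = 0` and `S = 1` demand incompatible values of `λ(0,1)`. -/
theorem not_garbling_cex : ¬ Garbling (m12 cex) (m13 cex) := by
  rintro ⟨lam, hnonneg, hsum, heq⟩
  have h₀ := heq 0 true
  have h₁ := heq 1 true
  have h₂ := heq 2 false
  have hrow := hsum true
  rw [Fintype.sum_bool, m12_cex, m13_cex, m13_cex] at h₀ h₁ h₂
  rw [Fintype.sum_bool] at hrow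
  norm_num [Fin.ext_iff] at h₀ h₁ h₂
  linarith [hnonneg true false]

/-- Corollary: there is no nonnegative bivariate information
decomposition in which UI satisfies the Blackwell property and SI satisfies
left monotonicity. -/
theorem no_blackwell_and_left_monotonic :
    ¬ ∃ D : ∀ (X₁ X₂ : Type) [Fintype X₁] [Fintype X₂], BID X₁ X₂,
      (∀ (X₁ X₂ : Type) [Fintype X₁] [Fintype X₂] (T : Type) [Fintype T]
        (p : T → X₁ → X₂ → ℝ), IsPMF3 p →
          ((D X₁ X₂).UI1 T p = 0 ↔ Garbling (m12 p) (m13 p)))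
      ∧ (∀ (X₁ X₂ : Type) [Fintype X₁] [Fintype X₂] (T T' : Type) [Fintype T]
        [Fintype T'] (f : T → T') (p : T → X₁ → X₂ → ℝ), IsPMF3 p →
          (D X₁ X₂).SI T' (pushS3 f p) ≤ (D X₁ X₂).SI T p) := by
  rintro ⟨D, hBlackwell, hMono⟩
  have hB : (D Bool Bool).IsBlackwell := hBlackwell Bool Bool
  have hq : IsPMF3 (pushS3 fstar cex) := isPMF3_cex.pushS3 fstar
  have hSIq : (D Bool Bool).SI (Fin 3) (pushS3 fstar cex) = MI1 cex := by
    rw [hB.SI_eq_MI1 hq (m12_pushS3_fstar_cex ▸ Garbling.refl _),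
      MI1_pushS3_of_condIndep isPMF3_cex condIndep_tripleOf_fstar_cex]
  have hSIp : (D Bool Bool).SI (Fin 3) cex < MI1 cex :=
    hB.SI_lt_MI1 isPMF3_cex not_garbling_cex
  have hle := hMono Bool Bool (Fin 3) (Fin 3) fstar cex isPMF3_cex
  linarith

end
end Paper
end

section
/- (Proposition 1) Suppose SI, UI, CI form a bivariate information decomposition (satisfying the three decomposition equations) in which both SI and UI are left monotonic in the target argument. Then for any finite random variables X₁, X₂ and any function f, SI(f(X₁,X₂); X₁, X₂) ≤ I(X₁;X₂). -/
/- Common definitions: finite joint distributions, mutual information (in nats),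
   conditional mutual information, pushforwards, information decompositions. -/

open Finset
open scoped Classical

namespace Paper

noncomputable section

variable {S T T' X X₁ X₂ Z A B : Type*}

/-! Write S = COPY(X₁,X₂) = (X₁,X₂). By left monotonicity of SI it suffices to bound
SI(S;X₁,X₂). Since X₁ is a function of S, I(S;X₁) = H(X₁) = I(X₁;X₁), and left monotonicity
of UI along S ↦ X₁ gives UI(X₁;X₁\X₂) ≤ UI(S;X₁\X₂). Hence, by the decomposition equations,
SI(S;X₁,X₂) = I(S;X₁) − UI(S;X₁\X₂) ≤ I(X₁;X₁) − UI(X₁;X₁\X₂) = SI(X₁;X₁,X₂) ≤ I(X₁;X₂). -/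

open Real

theorem MI_ite_eq_sum_negMulLog [Fintype S] [Fintype X] (g : S → X) (w : S → ℝ) :
    MI (fun s x => if x = g s then w s else 0) =
      ∑ x, negMulLog (∑ s, if g s = x then w s else 0) := by
  set W : X → ℝ := fun x => ∑ s, if g s = x then w s else 0
  have hm1 : ∀ s, m1 (fun s x => if x = g s then w s else 0) s = w s := by
    intro s; simp [m1]
  have hm2 : ∀ x, m2 (fun s x => if x = g s then w s else 0) x = W x := by
    intro x; simp only [m2, W]; congr 1; ext s; simp [eq_comm]
  have hterm : ∀ s, w s * log (w s / (w s * W (g s))) = -(w s * log (W (g s))) := by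
    intro s
    rcases eq_or_ne (w s) 0 with h | h
    · simp [h]
    · rw [div_mul_cancel_left₀ h, log_inv, mul_neg]
  calc MI (fun s x => if x = g s then w s else 0)
      = ∑ s, -(w s * log (W (g s))) := by
        simp only [MI, hm1, hm2]
        refine sum_congr rfl fun s _ => ?_
        rw [← hterm]
        simp
    _ = ∑ x, negMulLog (W x) := by
        simp only [negMulLog, W, sum_mul, ← sum_neg_distrib]
        rw [sum_comm]
        refine sum_congr rfl fun s _ => ?_
        simp

theorem isPMF3_pushS3 [Fintype S] [Fintype T] [Fintype X₁] [Fintype X₂] (g : S → T)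
    {p : S → X₁ → X₂ → ℝ} (hp : IsPMF3 p) : IsPMF3 (pushS3 g p) := by
  refine ⟨fun t x₁ x₂ => sum_nonneg fun s _ => ?_, ?_⟩
  · split_ifs
    exacts [hp.1 _ _ _, le_rfl]
  · have hfib : ∀ x₁ x₂, ∑ t, pushS3 g p t x₁ x₂ = ∑ s, p s x₁ x₂ := by
      intro x₁ x₂
      simp only [pushS3]
      rw [sum_comm]
      simp
    rw [← hp.2]
    calc ∑ t, ∑ x₁, ∑ x₂, pushS3 g p t x₁ x₂
        = ∑ x₁, ∑ x₂, ∑ t, pushS3 g p t x₁ x₂ := by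
          rw [sum_comm]; exact sum_congr rfl fun _ _ => sum_comm
      _ = ∑ x₁, ∑ x₂, ∑ s, p s x₁ x₂ := by simp only [hfib]
      _ = ∑ s, ∑ x₁, ∑ x₂, p s x₁ x₂ := by
          symm; rw [sum_comm]; exact sum_congr rfl fun _ _ => sum_comm

section CopyTriple

variable [Fintype X₁] [Fintype X₂]

/-- Joint distribution of (X₁, X₁, X₂): the target is X₁ itself. -/
def diagTriple (q : X₁ → X₂ → ℝ) : X₁ → X₁ → X₂ → ℝ :=
  fun t x₁ x₂ => if x₁ = t then q x₁ x₂ else 0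

theorem pushS3_fst_copyTriple (q : X₁ → X₂ → ℝ) :
    pushS3 Prod.fst (copyTriple q) = diagTriple q := by
  funext t x₁ x₂
  by_cases h : x₁ = t
  · subst h; simp [pushS3, copyTriple, diagTriple, Fintype.sum_prod_type, Prod.ext_iff, eq_comm]
  · simp [pushS3, copyTriple, diagTriple, Fintype.sum_prod_type, Prod.ext_iff, h, Ne.symm h]

theorem isPMF3_copyTriple {q : X₁ → X₂ → ℝ} (hq : IsPMF q) : IsPMF3 (copyTriple q) := by
  refine ⟨fun s x₁ x₂ => ?_, ?_⟩
  · unfold copyTriple; split_ifs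
    exacts [hq.1 _ _, le_rfl]
  · simp only [copyTriple, ← Fintype.sum_prod_type']
    simpa [Fintype.sum_prod_type] using hq.2

theorem MI1_copyTriple (q : X₁ → X₂ → ℝ) :
    MI1 (copyTriple q) = ∑ x, negMulLog (m1 q x) := by
  have h : m12 (copyTriple q) = fun s x₁ => if x₁ = s.1 then q s.1 s.2 else 0 := by
    funext s x₁
    by_cases h : x₁ = s.1 <;> simp [m12, copyTriple, Prod.ext_iff, h, eq_comm]
  rw [MI1, h, MI_ite_eq_sum_negMulLog]
  simp [Fintype.sum_prod_type, m1]

theorem MI1_diagTriple (q : X₁ → X₂ → ℝ) :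
    MI1 (diagTriple q) = ∑ x, negMulLog (m1 q x) := by
  have h : m12 (diagTriple q) = fun t x₁ => if x₁ = id t then m1 q t else 0 := by
    funext t x₁
    by_cases h : x₁ = t
    · subst h; simp [m12, diagTriple, m1]
    · simp [m12, diagTriple, h]
  rw [MI1, h, MI_ite_eq_sum_negMulLog]
  simp

theorem MI2_diagTriple (q : X₁ → X₂ → ℝ) : MI2 (diagTriple q) = MI q := by
  rw [MI2]; congr 1
  funext t x₂
  simp [m13, diagTriple]

end CopyTriple

theorem BID.SI_eq_MI1_sub_UI1 {X₁ X₂ : Type} [Fintype X₁] [Fintype X₂] (D : BID X₁ X₂)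
    {T : Type} [Fintype T] {p : T → X₁ → X₂ → ℝ} (hp : IsPMF3 p) :
    D.SI T p = MI1 p - D.UI1 T p := by
  linarith [D.eq_one T p hp]

theorem BID.SI_le_MI2 {X₁ X₂ : Type} [Fintype X₁] [Fintype X₂] (D : BID X₁ X₂)
    {T : Type} [Fintype T] {p : T → X₁ → X₂ → ℝ} (hp : IsPMF3 p) : D.SI T p ≤ MI2 p := by
  linarith [D.eq_two T p hp, D.UI2_nonneg T p hp]

/-- Proposition 1: if both SI and UI of a bivariate information
decomposition are left monotonic in the target argument, then
SI(f(X₁,X₂);X₁,X₂) ≤ I(X₁;X₂) for every function f. -/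
theorem left_monotonic_decomposition_bound {X₁ X₂ T' : Type}
    [Fintype X₁] [Fintype X₂] [Fintype T']
    (D : BID X₁ X₂)
    (hSI_lm : ∀ (T T'' : Type) [Fintype T] [Fintype T''] (g : T → T'')
      (p : T → X₁ → X₂ → ℝ), IsPMF3 p → D.SI T'' (pushS3 g p) ≤ D.SI T p)
    (hUI_lm : ∀ (T T'' : Type) [Fintype T] [Fintype T''] (g : T → T'')
      (p : T → X₁ → X₂ → ℝ), IsPMF3 p → D.UI1 T'' (pushS3 g p) ≤ D.UI1 T p)
    (q : X₁ → X₂ → ℝ) (hq : IsPMF q) (f : X₁ × X₂ → T') :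
    D.SI T' (pushS3 f (copyTriple q)) ≤ MI q := by
  have hcopy : IsPMF3 (copyTriple q) := isPMF3_copyTriple hq
  have hdiag : IsPMF3 (diagTriple q) := pushS3_fst_copyTriple q ▸ isPMF3_pushS3 Prod.fst hcopy
  have hUI : D.UI1 X₁ (diagTriple q) ≤ D.UI1 (X₁ × X₂) (copyTriple q) :=
    pushS3_fst_copyTriple q ▸ hUI_lm _ _ Prod.fst _ hcopy
  calc D.SI T' (pushS3 f (copyTriple q))
      ≤ D.SI (X₁ × X₂) (copyTriple q) := hSI_lm _ _ f _ hcopy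
    _ = MI1 (copyTriple q) - D.UI1 (X₁ × X₂) (copyTriple q) := D.SI_eq_MI1_sub_UI1 hcopy
    _ ≤ MI1 (diagTriple q) - D.UI1 X₁ (diagTriple q) := by
        rw [MI1_copyTriple, MI1_diagTriple]
        exact sub_le_sub_left hUI _
    _ = D.SI X₁ (diagTriple q) := (D.SI_eq_MI1_sub_UI1 hdiag).symm
    _ ≤ MI2 (diagTriple q) := D.SI_le_MI2 hdiag
    _ = MI q := MI2_diagTriple q

end
end Paper
end
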